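/- The convex envelope of the symmetric double-well function g(m) = -m²/2 - I(m)/β for β > 1 is constant (flat) on the interval [-m*, m*], where m* is the positive solution of m = tanh(β m), and coincides with g outside this interval. -/

import Mathlib

noncomputable def binEntropy (m : ℝ) : ℝ :=
  -((1 - m) / 2) * Real.log ((1 - m) / 2) - ((1 + m) / 2) * Real.log ((1 + m) / 2)

noncomputable def meanFieldFreeEnergy (β m : ℝ) : ℝ := -m ^ 2 / 2 - binEntropy m / β

/-- The convex envelope (largest convex minorant) of `meanFieldFreeEnergy β` on `(-1,1)`. -/
noncomputable def convexEnvelope (β m : ℝ) : ℝ :=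
  sSup {y : ℝ | ∃ φ : ℝ → ℝ, ConvexOn ℝ (Set.Ioo (-1 : ℝ) 1) φ ∧
    (∀ x ∈ Set.Ioo (-1 : ℝ) 1, φ x ≤ meanFieldFreeEnergy β x) ∧ y = φ m}

/-!
The derivative of `g = meanFieldFreeEnergy β` is `g' m = artanh m / β - m`. As `artanh` is convex
on `[0, 1)`, so is `g'`; it vanishes at `0` and at `m*` (the fixed-point equation says
`artanh m* = β m*`), hence `g' ≤ 0` on `[0, m*]` while `g'` is nonnegative and monotone on
`[m*, 1)`. Thus `g` is convex on `[m*, 1)` and, being even, is minimal at `± m*`. For `|m| ≥ m*`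
the tangent line of `g` at `m` is then a convex minorant of `g` touching it at `m`. On
`[-m*, m*]` the constant `g m*` is a convex minorant, and any convex minorant `φ` satisfies
`φ m ≤ max (φ (-m*)) (φ m*) ≤ g m*` there.
-/

open Set

namespace Real

lemma hasDerivAt_artanh {x : ℝ} (hx : x ∈ Ioo (-1) 1) : HasDerivAt artanh (1 - x ^ 2)⁻¹ x := by
  have h₁ : 0 < 1 + x := by linarith [hx.1]
  have h₂ : 0 < 1 - x := by linarith [hx.2]
  have hlog := (((hasDerivAt_id x).const_add 1).log h₁.ne').sub
    (((hasDerivAt_id x).const_sub 1).log h₂.ne') |>.const_mul (1 / 2)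
  refine (hlog.congr_of_eventuallyEq ?_).congr_deriv ?_
  · filter_upwards [Ioo_mem_nhds hx.1 hx.2] with y hy
    rw [artanh_eq_half_log (Ioo_subset_Icc_self hy),
      log_div (by linarith [hy.1]) (by linarith [hy.2])]
    rfl
  · have : 1 - x ^ 2 ≠ 0 := by nlinarith
    simp only [id]
    field_simp
    ring

lemma convexOn_artanh : ConvexOn ℝ (Ico 0 1) artanh := by
  have hd : ∀ x ∈ Ico (0 : ℝ) 1, HasDerivAt artanh (1 - x ^ 2)⁻¹ x :=
    fun x hx ↦ hasDerivAt_artanh ⟨by linarith [hx.1], hx.2⟩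
  refine MonotoneOn.convexOn_of_deriv (convex_Ico 0 1)
    (fun x hx ↦ (hd x hx).continuousAt.continuousWithinAt) ?_ ?_ <;> rw [interior_Ico]
  · exact fun x hx ↦ (hd x (Ioo_subset_Ico_self hx)).differentiableAt.differentiableWithinAt
  · intro x hx y hy hxy
    rw [(hd x (Ioo_subset_Ico_self hx)).deriv, (hd y (Ioo_subset_Ico_self hy)).deriv]
    have : 0 < 1 - y ^ 2 := by nlinarith [hy.1, hy.2]
    gcongr
    nlinarith [hx.1]

end Real

open Real (artanh)

lemma ConvexOn.monotoneOn_inter_Ici {𝕜 E : Type*} [Field 𝕜] [LinearOrder 𝕜]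
    [IsStrictOrderedRing 𝕜] [AddCommMonoid E] [LinearOrder E] [IsOrderedCancelAddMonoid E]
    [Module 𝕜 E] [PosSMulStrictMono 𝕜 E] {s : Set 𝕜} {f : 𝕜 → E} {a b : 𝕜}
    (hf : ConvexOn 𝕜 s f) (ha : a ∈ s) (hab : a < b) (hfab : f a ≤ f b) :
    MonotoneOn f (s ∩ Ici b) := by
  intro u hu v hv huv
  have hbu : f b ≤ f u := hf.le_right_of_left_le'' ha hu.1 hab hu.2 hfab
  exact hf.le_right_of_left_le'' ha hv.1 (hab.trans_le hu.2) huv (hfab.trans hbu)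

lemma ConvexOn.add_mul_sub_le_of_hasDerivAt {s : Set ℝ} {f : ℝ → ℝ} {f' x y : ℝ}
    (hf : ConvexOn ℝ s f) (hx : x ∈ s) (hy : y ∈ s) (hf' : HasDerivAt f f' x) :
    f x + f' * (y - x) ≤ f y := by
  rcases lt_trichotomy x y with hxy | rfl | hxy
  · have := hf.le_slope_of_hasDerivAt hx hy hxy hf'
    rw [slope_def_field, le_div_iff₀ (sub_pos.2 hxy)] at this
    linarith
  · simp
  · have := hf.slope_le_of_hasDerivAt hy hx hxy hf'
    rw [slope_def_field, div_le_iff₀ (sub_pos.2 hxy)] at this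
    linarith

lemma binEntropy_eq_real_binEntropy (m : ℝ) : binEntropy m = Real.binEntropy ((1 - m) / 2) := by
  simp only [binEntropy, Real.binEntropy, Real.log_inv]
  ring_nf

lemma binEntropy_neg (m : ℝ) : binEntropy (-m) = binEntropy m := by
  unfold binEntropy
  ring_nf

lemma hasDerivAt_binEntropy {m : ℝ} (hm : m ∈ Ioo (-1) 1) :
    HasDerivAt binEntropy (-artanh m) m := by
  have h₁ : 0 < 1 + m := by linarith [hm.1]
  have h₂ : 0 < 1 - m := by linarith [hm.2]
  have hp : HasDerivAt (fun x : ℝ ↦ (1 - x) / 2) (-1 / 2) m := by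
    simpa using ((hasDerivAt_id m).const_sub 1).div_const 2
  have h := (Real.hasDerivAt_binEntropy (p := (1 - m) / 2) (by linarith) (by linarith)).comp m hp
  rw [show binEntropy = fun x ↦ Real.binEntropy ((1 - x) / 2) from
    funext binEntropy_eq_real_binEntropy]
  refine h.congr_deriv ?_
  rw [Real.artanh_eq_half_log (Ioo_subset_Icc_self hm), show 1 - (1 - m) / 2 = (1 + m) / 2 by ring,
    Real.log_div h₁.ne' h₂.ne', Real.log_div h₁.ne' two_ne_zero, Real.log_div h₂.ne' two_ne_zero]
  ring

lemma meanFieldFreeEnergy_neg (β m : ℝ) :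
    meanFieldFreeEnergy β (-m) = meanFieldFreeEnergy β m := by
  simp only [meanFieldFreeEnergy, binEntropy_neg, neg_sq]

noncomputable def meanFieldFreeEnergyDeriv (β m : ℝ) : ℝ := artanh m / β - m

lemma hasDerivAt_meanFieldFreeEnergy {β m : ℝ} (hm : m ∈ Ioo (-1) 1) :
    HasDerivAt (meanFieldFreeEnergy β) (meanFieldFreeEnergyDeriv β m) m := by
  have h := ((hasDerivAt_pow 2 m).neg.div_const 2).sub ((hasDerivAt_binEntropy hm).div_const β)
  refine h.congr_deriv ?_
  simp only [meanFieldFreeEnergyDeriv]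
  ring

lemma continuousOn_meanFieldFreeEnergy (β : ℝ) :
    ContinuousOn (meanFieldFreeEnergy β) (Ioo (-1) 1) :=
  fun _ hm ↦ (hasDerivAt_meanFieldFreeEnergy hm).continuousAt.continuousWithinAt

lemma meanFieldFreeEnergyDeriv_zero (β : ℝ) : meanFieldFreeEnergyDeriv β 0 = 0 := by
  simp [meanFieldFreeEnergyDeriv, Real.artanh_zero]

lemma convexOn_meanFieldFreeEnergyDeriv {β : ℝ} (hβ : 0 < β) :
    ConvexOn ℝ (Ico 0 1) (meanFieldFreeEnergyDeriv β) := by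
  have h := (Real.convexOn_artanh.smul (inv_nonneg.2 hβ.le)).sub (concaveOn_id (convex_Ico 0 1))
  exact h.congr fun m _ ↦ by simp [meanFieldFreeEnergyDeriv, div_eq_inv_mul]

def IsConvexMinorant (β : ℝ) (φ : ℝ → ℝ) : Prop :=
  ConvexOn ℝ (Ioo (-1) 1) φ ∧ ∀ x ∈ Ioo (-1 : ℝ) 1, φ x ≤ meanFieldFreeEnergy β x

lemma convexEnvelope_eq {β m c : ℝ} {φ : ℝ → ℝ} (hφ : IsConvexMinorant β φ) (hφm : φ m = c)
    (hle : ∀ ψ, IsConvexMinorant β ψ → ψ m ≤ c) : convexEnvelope β m = c :=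
  IsGreatest.csSup_eq
    ⟨⟨φ, hφ.1, hφ.2, hφm.symm⟩, by rintro _ ⟨ψ, hψ, hψg, rfl⟩; exact hle ψ ⟨hψ, hψg⟩⟩

lemma IsConvexMinorant.comp_neg {β : ℝ} {φ : ℝ → ℝ} (hφ : IsConvexMinorant β φ) :
    IsConvexMinorant β (fun x ↦ φ (-x)) := by
  refine ⟨?_, fun x hx ↦ ?_⟩
  · refine (hφ.1.comp_affineMap (-AffineMap.id ℝ ℝ)).subset (fun x hx ↦ ?_) (convex_Ioo _ _)
    simp only [mem_preimage, AffineMap.coe_neg, AffineMap.coe_id, Pi.neg_apply, id, mem_Ioo]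
    constructor <;> linarith [hx.1, hx.2]
  · rw [← meanFieldFreeEnergy_neg]
    exact hφ.2 (-x) ⟨by linarith [hx.2], by linarith [hx.1]⟩

lemma convexEnvelope_neg (β m : ℝ) : convexEnvelope β (-m) = convexEnvelope β m := by
  unfold convexEnvelope
  congr 1
  ext y
  constructor <;> rintro ⟨φ, hφ, hφg, rfl⟩ <;>
    exact ⟨_, (IsConvexMinorant.comp_neg ⟨hφ, hφg⟩).1, (IsConvexMinorant.comp_neg ⟨hφ, hφg⟩).2,
      by simp⟩

lemma isConvexMinorant_affine {β a b c : ℝ}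
    (h : ∀ x ∈ Ioo (-1 : ℝ) 1, a + b * (x - c) ≤ meanFieldFreeEnergy β x) :
    IsConvexMinorant β (fun x ↦ a + b * (x - c)) := by
  refine ⟨⟨convex_Ioo _ _, fun x _ y _ s t _ _ hst ↦ le_of_eq ?_⟩, h⟩
  simp only [smul_eq_mul]
  linear_combination (b * c - a) * hst

section CriticalPoint

variable {β m₀ : ℝ} (hβ : 0 < β) (hm₀ : m₀ ∈ Ioo 0 1)
  (hcrit : meanFieldFreeEnergyDeriv β m₀ = 0)
include hβ hm₀ hcrit

lemma meanFieldFreeEnergyDeriv_nonpos {x : ℝ} (hx : x ∈ Icc 0 m₀) :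
    meanFieldFreeEnergyDeriv β x ≤ 0 := by
  have h := (convexOn_meanFieldFreeEnergyDeriv hβ).le_on_segment (x := 0) (y := m₀)
    (left_mem_Ico.2 one_pos) (Ioo_subset_Ico_self hm₀) (by rwa [segment_eq_Icc hm₀.1.le])
  simpa [meanFieldFreeEnergyDeriv_zero, hcrit] using h

lemma monotoneOn_meanFieldFreeEnergyDeriv :
    MonotoneOn (meanFieldFreeEnergyDeriv β) (Ico m₀ 1) := by
  have h := (convexOn_meanFieldFreeEnergyDeriv hβ).monotoneOn_inter_Ici (left_mem_Ico.2 one_pos)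
    hm₀.1 (by rw [meanFieldFreeEnergyDeriv_zero, hcrit])
  rwa [Ico_inter_Ici, max_eq_right hm₀.1.le] at h

lemma meanFieldFreeEnergyDeriv_nonneg {x : ℝ} (hx : x ∈ Ico m₀ 1) :
    0 ≤ meanFieldFreeEnergyDeriv β x :=
  hcrit ▸ monotoneOn_meanFieldFreeEnergyDeriv hβ hm₀ hcrit (left_mem_Ico.2 hm₀.2) hx hx.1

lemma convexOn_meanFieldFreeEnergy : ConvexOn ℝ (Ico m₀ 1) (meanFieldFreeEnergy β) := by
  have hsub : Ico m₀ 1 ⊆ Ioo (-1) 1 := Ico_subset_Ioo_left (by linarith [hm₀.1])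
  have hd : ∀ x ∈ Ioo m₀ 1,
      HasDerivAt (meanFieldFreeEnergy β) (meanFieldFreeEnergyDeriv β x) x :=
    fun x hx ↦ hasDerivAt_meanFieldFreeEnergy (hsub (Ioo_subset_Ico_self hx))
  refine MonotoneOn.convexOn_of_deriv (convex_Ico m₀ 1)
    ((continuousOn_meanFieldFreeEnergy β).mono hsub) ?_ ?_ <;> rw [interior_Ico]
  · exact fun x hx ↦ (hd x hx).differentiableAt.differentiableWithinAt
  · intro x hx y hy hxy
    rw [(hd x hx).deriv, (hd y hy).deriv]
    exact monotoneOn_meanFieldFreeEnergyDeriv hβ hm₀ hcrit (Ioo_subset_Ico_self hx)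
      (Ioo_subset_Ico_self hy) hxy

lemma meanFieldFreeEnergy_tangent_le_of_mem_Ico {m x : ℝ} (hm : m ∈ Ico m₀ 1)
    (hx : x ∈ Ico m₀ 1) :
    meanFieldFreeEnergy β m + meanFieldFreeEnergyDeriv β m * (x - m) ≤
      meanFieldFreeEnergy β x :=
  (convexOn_meanFieldFreeEnergy hβ hm₀ hcrit).add_mul_sub_le_of_hasDerivAt hm hx
    (hasDerivAt_meanFieldFreeEnergy ⟨by linarith [hm.1, hm₀.1], hm.2⟩)

lemma isMinOn_meanFieldFreeEnergy : IsMinOn (meanFieldFreeEnergy β) (Ioo (-1) 1) m₀ := by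
  rw [isMinOn_iff]
  intro x hx
  wlog hx₀ : 0 ≤ x generalizing x
  · rw [← meanFieldFreeEnergy_neg β x]
    exact this (x := -x) ⟨by linarith [hx.2], by linarith [hx.1]⟩ (by linarith [not_le.1 hx₀])
  rcases le_total x m₀ with hxm | hxm
  · have hanti : AntitoneOn (meanFieldFreeEnergy β) (Icc 0 m₀) := by
      refine antitoneOn_of_hasDerivWithinAt_nonpos (f' := meanFieldFreeEnergyDeriv β)
        (convex_Icc 0 m₀)
        ((continuousOn_meanFieldFreeEnergy β).mono (Icc_subset_Ioo (by norm_num) hm₀.2))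
        (fun y hy ↦ ?_) (fun y hy ↦ ?_) <;> rw [interior_Icc] at hy
      · exact (hasDerivAt_meanFieldFreeEnergy
          ⟨by linarith [hy.1], by linarith [hy.2, hm₀.2]⟩).hasDerivWithinAt
      · exact meanFieldFreeEnergyDeriv_nonpos hβ hm₀ hcrit (Ioo_subset_Icc_self hy)
    exact hanti ⟨hx₀, hxm⟩ (right_mem_Icc.2 hm₀.1.le) hxm
  · simpa [hcrit] using meanFieldFreeEnergy_tangent_le_of_mem_Ico hβ hm₀ hcrit
      (left_mem_Ico.2 hm₀.2) ⟨hxm, hx.2⟩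

lemma meanFieldFreeEnergy_tangent_le {m x : ℝ} (hm : m ∈ Ico m₀ 1) (hx : x ∈ Ioo (-1) 1) :
    meanFieldFreeEnergy β m + meanFieldFreeEnergyDeriv β m * (x - m) ≤
      meanFieldFreeEnergy β x := by
  rcases le_total m₀ x with hxm | hxm
  · exact meanFieldFreeEnergy_tangent_le_of_mem_Ico hβ hm₀ hcrit hm ⟨hxm, hx.2⟩
  calc meanFieldFreeEnergy β m + meanFieldFreeEnergyDeriv β m * (x - m)
      ≤ meanFieldFreeEnergy β m + meanFieldFreeEnergyDeriv β m * (m₀ - m) := by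
        gcongr
        exact meanFieldFreeEnergyDeriv_nonneg hβ hm₀ hcrit hm
    _ ≤ meanFieldFreeEnergy β m₀ :=
        meanFieldFreeEnergy_tangent_le_of_mem_Ico hβ hm₀ hcrit hm (left_mem_Ico.2 hm₀.2)
    _ ≤ meanFieldFreeEnergy β x := isMinOn_meanFieldFreeEnergy hβ hm₀ hcrit hx

lemma convexEnvelope_eq_of_mem_Icc {m : ℝ} (hm : m ∈ Icc (-m₀) m₀) :
    convexEnvelope β m = meanFieldFreeEnergy β m₀ := by
  have hm₀' : -m₀ ≤ m₀ := by linarith [hm₀.1]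
  have hsub : Icc (-m₀) m₀ ⊆ Ioo (-1) 1 := Icc_subset_Ioo (by linarith [hm₀.2]) hm₀.2
  refine convexEnvelope_eq (φ := fun _ ↦ meanFieldFreeEnergy β m₀)
    ⟨convexOn_const _ (convex_Ioo _ _), fun x hx ↦ isMinOn_meanFieldFreeEnergy hβ hm₀ hcrit hx⟩
    rfl fun ψ hψ ↦ ?_
  calc ψ m ≤ max (ψ (-m₀)) (ψ m₀) :=
        hψ.1.le_on_segment (hsub (left_mem_Icc.2 hm₀')) (hsub (right_mem_Icc.2 hm₀'))
          (by rwa [segment_eq_Icc hm₀'])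
    _ ≤ meanFieldFreeEnergy β m₀ := by
        refine max_le ?_ (hψ.2 m₀ (hsub (right_mem_Icc.2 hm₀')))
        simpa [meanFieldFreeEnergy_neg] using hψ.2 (-m₀) (hsub (left_mem_Icc.2 hm₀'))

lemma convexEnvelope_eq_of_mem_Ico {m : ℝ} (hm : m ∈ Ico m₀ 1) :
    convexEnvelope β m = meanFieldFreeEnergy β m :=
  convexEnvelope_eq (isConvexMinorant_affine fun _ hx ↦
    meanFieldFreeEnergy_tangent_le hβ hm₀ hcrit hm hx) (by simp)
    fun ψ hψ ↦ hψ.2 m ⟨by linarith [hm.1, hm₀.1], hm.2⟩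

end CriticalPoint

theorem convex_envelope_flat_on_plateau (β : ℝ) (hβ : 1 < β)
    (mstar : ℝ) (hmem : mstar ∈ Set.Ioo (0 : ℝ) 1)
    (hsol : mstar = Real.tanh (β * mstar)) :
    (∀ m ∈ Set.Icc (-mstar) mstar, convexEnvelope β m = meanFieldFreeEnergy β mstar) ∧
    (∀ m ∈ Set.Ioo (-1 : ℝ) 1, mstar ≤ |m| →
      convexEnvelope β m = meanFieldFreeEnergy β m) := by
  have hβ₀ : 0 < β := by linarith
  have hcrit : meanFieldFreeEnergyDeriv β mstar = 0 := by
    have hfix : artanh mstar = β * mstar := by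
      conv_lhs => rw [hsol]
      exact Real.artanh_tanh _
    rw [meanFieldFreeEnergyDeriv, hfix, mul_div_cancel_left₀ _ hβ₀.ne', sub_self]
  refine ⟨fun m hm ↦ convexEnvelope_eq_of_mem_Icc hβ₀ hmem hcrit hm, fun m hm habs ↦ ?_⟩
  rcases le_total 0 m with h | h
  · rw [abs_of_nonneg h] at habs
    exact convexEnvelope_eq_of_mem_Ico hβ₀ hmem hcrit ⟨habs, hm.2⟩
  · rw [abs_of_nonpos h] at habs
    rw [← neg_neg m, convexEnvelope_neg, meanFieldFreeEnergy_neg]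
    exact convexEnvelope_eq_of_mem_Ico hβ₀ hmem hcrit ⟨habs, by linarith [hm.1]⟩
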